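/- Let n ≥ 1, let s·T > 0 be a positive real, and for each l = 0, 1, …, L−1 let Q_l be an n×n CTMC generator matrix (off-diagonal entries nonnegative, zero row sums), let Λ_l > 0 satisfy Λ_l ≥ max_i |(Q_l)_{ii}|, set P_l = I + Q_l/Λ_l, and let U_l be a natural number. Define sequences of row vectors by π̃_0 = π̂_0, where π̂_0 is a probability vector (nonnegative entries summing to 1), and by π̃_{l+1} = π̃_l · exp(sT · Q_l) and π̂_{l+1} = π̂_l · Σ_{m=0}^{U_l} e^{−Λ_l sT} ((Λ_l sT)^m / m!) P_l^m. Then for every L ≥ 0, ‖π̂_L − π̃_L‖₁ ≤ Σ_{l=0}^{L−1} (1 − Σ_{m=0}^{U_l} e^{−Λ_l sT} (Λ_l sT)^m / m!). -/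

import Mathlib

/-!
With `P = 1 + Λ⁻¹ • Q` row stochastic and `sT • Q = Λ sT • (P - 1)`, the exponential
`E = exp (sT • Q)` is the Poisson(`Λ sT`) mixture `∑ₘ wₘ • Pᵐ`, hence row stochastic, and its
truncation `M = ∑_{m ≤ U} wₘ • Pᵐ` satisfies `0 ≤ M ≤ E` entrywise with row sums `S = ∑_{m ≤ U} wₘ`.
Writing `π̂ M - π̃ E = (π̂ - π̃) M - π̃ (E - M)`, the first term is `ℓ¹`-nonexpansive since the rows
of `M` have mass at most one, and the second has `ℓ¹` mass `1 - S` because `π̃` is a probability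
vector. Each interval therefore adds at most its Poisson tail mass to the error.
-/

open Matrix Finset

theorem HasSum.matrix_apply {X m n R : Type*} [AddCommMonoid R] [TopologicalSpace R]
    {f : X → Matrix m n R} {a : Matrix m n R} (hf : HasSum f a) (i : m) (j : n) :
    HasSum (fun x => f x i j) (a i j) :=
  Pi.hasSum.mp (Pi.hasSum.mp hf i) j

namespace Matrix

variable {ι : Type*} [Fintype ι]

theorem sum_abs_vecMul_le {M : Matrix ι ι ℝ} {r : ℝ} (hM : ∀ i j, 0 ≤ M i j)
    (hrow : ∀ i, ∑ j, M i j ≤ r) (v : ι → ℝ) : ∑ j, |(v ᵥ* M) j| ≤ r * ∑ i, |v i| :=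
  calc ∑ j, |(v ᵥ* M) j|
      ≤ ∑ j, ∑ i, |v i| * M i j := sum_le_sum fun j _ =>
        (abs_sum_le_sum_abs _ _).trans_eq (by simp [abs_mul, abs_of_nonneg (hM _ _)])
    _ = ∑ i, |v i| * ∑ j, M i j := by rw [sum_comm]; simp [mul_sum]
    _ ≤ ∑ i, |v i| * r := sum_le_sum fun i _ => mul_le_mul_of_nonneg_left (hrow i) (abs_nonneg _)
    _ = r * ∑ i, |v i| := by rw [← sum_mul, mul_comm]

variable [DecidableEq ι]

theorem vecMul_mem_stdSimplex {M : Matrix ι ι ℝ} {x : ι → ℝ} (hM : M ∈ rowStochastic ℝ ι)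
    (hx : x ∈ stdSimplex ℝ ι) : x ᵥ* M ∈ stdSimplex ℝ ι := by
  refine ⟨nonneg_vecMul_of_mem_rowStochastic hM hx.1, ?_⟩
  have hx1 : x ⬝ᵥ 1 = 1 := (dotProduct_one x).trans hx.2
  exact (dotProduct_one _).symm.trans (vecMul_dotProduct_one_eq_one_rowStochastic hM hx1)

theorem one_add_inv_smul_mem_rowStochastic {Q : Matrix ι ι ℝ} {Λ : ℝ}
    (hoff : ∀ i j, i ≠ j → 0 ≤ Q i j) (hrow : ∀ i, ∑ j, Q i j = 0) (hΛ : 0 < Λ)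
    (hdiag : ∀ i, -Λ ≤ Q i i) : 1 + Λ⁻¹ • Q ∈ rowStochastic ℝ ι := by
  refine mem_rowStochastic_iff_sum.2 ⟨fun i j => ?_, fun i => ?_⟩
  · rcases eq_or_ne i j with rfl | hij
    · have : -1 ≤ Λ⁻¹ * Q i i := by
        rw [le_inv_mul_iff₀ hΛ]; linarith [hdiag i]
      simp only [add_apply, one_apply_eq, smul_apply, smul_eq_mul]
      linarith
    · simpa [one_apply_ne hij] using mul_nonneg (inv_nonneg.2 hΛ.le) (hoff i j hij)
  · simp [sum_add_distrib, ← mul_sum, hrow i, one_apply]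

open NormedSpace in
open scoped Nat Norms.Operator in
theorem hasSum_poisson_smul_pow (A : Matrix ι ι ℝ) (c : ℝ) :
    HasSum (fun m : ℕ => (Real.exp (-c) * c ^ m / m !) • A ^ m) (exp (c • (A - 1))) := by
  have hsplit : c • (A - 1) = algebraMap ℝ _ (-c) + c • A := by
    rw [Algebra.algebraMap_eq_smul_one]; module
  have hscalar : exp (algebraMap ℝ (Matrix ι ι ℝ) (-c)) = algebraMap ℝ _ (Real.exp (-c)) := by
    rw [Real.exp_eq_exp_ℝ]; exact (algebraMap_exp_comm (-c)).symm
  rw [hsplit, exp_add_of_commute _ _ (Algebra.commute_algebraMap_left _ _), hscalar,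
    ← Algebra.smul_def]
  refine ((exp_series_hasSum_exp' (𝕂 := ℝ) (c • A)).const_smul (Real.exp (-c))).congr_fun
    fun m => ?_
  rw [smul_pow, smul_smul, smul_smul]
  congr 1
  field_simp

theorem hasSum_poisson_smul_pow_one_add_inv_smul (Q : Matrix ι ι ℝ) {Λ : ℝ} (hΛ : Λ ≠ 0)
    (t : ℝ) :
    HasSum (fun m : ℕ => (Real.exp (-(Λ * t)) * (Λ * t) ^ m / m.factorial) • (1 + Λ⁻¹ • Q) ^ m)
      (NormedSpace.exp (t • Q)) := by
  convert hasSum_poisson_smul_pow (1 + Λ⁻¹ • Q) (Λ * t) using 2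
  rw [add_sub_cancel_left, smul_smul, mul_right_comm, mul_inv_cancel₀ hΛ, one_mul]

section ConvexSeries

variable {A : ℕ → Matrix ι ι ℝ} {w : ℕ → ℝ} {E : Matrix ι ι ℝ}

theorem sum_smul_apply_nonneg (hA : ∀ m, A m ∈ rowStochastic ℝ ι) (hw : ∀ m, 0 ≤ w m)
    (s : Finset ℕ) (i j : ι) : 0 ≤ (∑ m ∈ s, w m • A m) i j := by
  rw [sum_apply]
  exact sum_nonneg fun m _ => mul_nonneg (hw m) (nonneg_of_mem_rowStochastic (hA m))

theorem sum_row_sum_smul_of_mem_rowStochastic (hA : ∀ m, A m ∈ rowStochastic ℝ ι)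
    (s : Finset ℕ) (i : ι) :
    ∑ j, (∑ m ∈ s, w m • A m) i j = ∑ m ∈ s, w m := by
  simp only [sum_apply, smul_apply, smul_eq_mul]
  rw [sum_comm]
  simp [← mul_sum, sum_row_of_mem_rowStochastic (hA _) i]

theorem sum_smul_apply_le_of_hasSum (hA : ∀ m, A m ∈ rowStochastic ℝ ι) (hw : ∀ m, 0 ≤ w m)
    (hE : HasSum (fun m => w m • A m) E) (s : Finset ℕ) (i j : ι) :
    (∑ m ∈ s, w m • A m) i j ≤ E i j := by
  rw [sum_apply]
  exact sum_le_hasSum s (fun m _ => mul_nonneg (hw m) (nonneg_of_mem_rowStochastic (hA m)))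
    (hE.matrix_apply i j)

theorem mem_rowStochastic_of_hasSum (hA : ∀ m, A m ∈ rowStochastic ℝ ι) (hw : ∀ m, 0 ≤ w m)
    (hw1 : HasSum w 1) (hE : HasSum (fun m => w m • A m) E) : E ∈ rowStochastic ℝ ι := by
  refine mem_rowStochastic_iff_sum.2 ⟨fun i j => ?_, fun i => ?_⟩
  · exact (hE.matrix_apply i j).nonneg fun m =>
      mul_nonneg (hw m) (nonneg_of_mem_rowStochastic (hA m))
  · have hrow : HasSum (fun m => ∑ j, (w m • A m) i j) (∑ j, E i j) :=
      hasSum_sum fun j _ => hE.matrix_apply i j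
    simp only [smul_apply, smul_eq_mul, ← mul_sum, sum_row_of_mem_rowStochastic (hA _) i,
      mul_one] at hrow
    exact hrow.unique hw1

end ConvexSeries

theorem sum_abs_vecMul_sub_vecMul_le {M E : Matrix ι ι ℝ} {S : ℝ} {x y : ι → ℝ}
    (hy : y ∈ stdSimplex ℝ ι) (hE : E ∈ rowStochastic ℝ ι) (hM : ∀ i j, 0 ≤ M i j)
    (hME : ∀ i j, M i j ≤ E i j) (hS : ∀ i, S ≤ ∑ j, M i j) :
    ∑ j, |(x ᵥ* M) j - (y ᵥ* E) j| ≤ ∑ i, |x i - y i| + (1 - S) := by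
  have hsplit : ∀ j, (x ᵥ* M) j - (y ᵥ* E) j = ((x - y) ᵥ* M) j - (y ᵥ* (E - M)) j :=
    fun j => by rw [sub_vecMul, vecMul_sub]; simp only [Pi.sub_apply]; ring
  have hM1 : ∀ i, ∑ j, M i j ≤ 1 := fun i =>
    (sum_le_sum fun j _ => hME i j).trans_eq (sum_row_of_mem_rowStochastic hE i)
  have hEM : ∀ i, ∑ j, (E - M) i j ≤ 1 - S := fun i => by
    simp only [sub_apply, sum_sub_distrib, sum_row_of_mem_rowStochastic hE i]
    linarith [hS i]
  have hy1 : ∑ i, |y i| = 1 := by simp [abs_of_nonneg (hy.1 _), hy.2]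
  calc ∑ j, |(x ᵥ* M) j - (y ᵥ* E) j|
      = ∑ j, |((x - y) ᵥ* M) j - (y ᵥ* (E - M)) j| := by simp only [hsplit]
    _ ≤ ∑ j, |((x - y) ᵥ* M) j| + ∑ j, |(y ᵥ* (E - M)) j| := by
        rw [← sum_add_distrib]; exact sum_le_sum fun j _ => abs_sub _ _
    _ ≤ 1 * ∑ i, |(x - y) i| + (1 - S) * ∑ i, |y i| :=
        add_le_add (sum_abs_vecMul_le hM hM1 _)
          (sum_abs_vecMul_le (fun i j => sub_nonneg.2 (hME i j)) hEM _)
    _ = ∑ i, |x i - y i| + (1 - S) := by simp [hy1]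

theorem sum_abs_sub_le_of_vecMul {x y : ℕ → ι → ℝ} {M E : ℕ → Matrix ι ι ℝ} {S : ℕ → ℝ}
    (hy0 : y 0 ∈ stdSimplex ℝ ι) (hx : ∀ l, x (l + 1) = x l ᵥ* M l)
    (hy : ∀ l, y (l + 1) = y l ᵥ* E l) (hE : ∀ l, E l ∈ rowStochastic ℝ ι)
    (hM : ∀ l i j, 0 ≤ M l i j) (hME : ∀ l i j, M l i j ≤ E l i j)
    (hS : ∀ l i, S l ≤ ∑ j, M l i j) (L : ℕ) :
    ∑ i, |x L i - y L i| ≤ ∑ i, |x 0 i - y 0 i| + ∑ l ∈ range L, (1 - S l) := by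
  have hyL : ∀ l, y l ∈ stdSimplex ℝ ι := fun l => by
    induction l with
    | zero => exact hy0
    | succ l ih => rw [hy l]; exact vecMul_mem_stdSimplex (hE l) ih
  induction L with
  | zero => simp
  | succ L ih =>
    rw [hx, hy, sum_range_succ, ← add_assoc]
    exact (sum_abs_vecMul_sub_vecMul_le (hyL L) (hE L) (hM L) (hME L) (hS L)).trans
      (by linarith)

end Matrix

theorem accumulated_uniformization_error_bound_general
    {n : ℕ} (sT : ℝ) (hsT : 0 < sT)
    (Q : ℕ → Matrix (Fin n) (Fin n) ℝ)
    (hoff : ∀ l, ∀ i j : Fin n, i ≠ j → 0 ≤ Q l i j)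
    (hrow : ∀ l, ∀ i : Fin n, ∑ j, Q l i j = 0)
    (Λ : ℕ → ℝ) (hΛ : ∀ l, 0 < Λ l)
    (hΛQ : ∀ l, ∀ i : Fin n, |Q l i i| ≤ Λ l)
    (P : ℕ → Matrix (Fin n) (Fin n) ℝ)
    (hP : ∀ l, P l = 1 + (Λ l)⁻¹ • Q l)
    (U : ℕ → ℕ)
    (π0 : Fin n → ℝ) (hπ0 : ∀ i, 0 ≤ π0 i) (hπ0sum : ∑ i, π0 i = 1)
    (πtilde πhat : ℕ → Fin n → ℝ)
    (hπtilde0 : πtilde 0 = π0) (hπhat0 : πhat 0 = π0)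
    (hπtilde : ∀ l, πtilde (l + 1) = πtilde l ᵥ* NormedSpace.exp (sT • Q l))
    (hπhat : ∀ l, πhat (l + 1) = πhat l ᵥ* (∑ m ∈ Finset.range (U l + 1),
        (Real.exp (-(Λ l * sT)) * (Λ l * sT) ^ m / m.factorial) • (P l) ^ m)) :
    ∀ L : ℕ,
      ∑ i, |πhat L i - πtilde L i|
        ≤ ∑ l ∈ Finset.range L,
            (1 - ∑ m ∈ Finset.range (U l + 1),
                Real.exp (-(Λ l * sT)) * (Λ l * sT) ^ m / m.factorial) := by
  intro L
  have hPpow : ∀ l m, P l ^ m ∈ rowStochastic ℝ (Fin n) := fun l m => pow_mem (hP l ▸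
    one_add_inv_smul_mem_rowStochastic (hoff l) (hrow l) (hΛ l) fun i => (abs_le.1 (hΛQ l i)).1) m
  have hrate : ∀ l, 0 ≤ Λ l * sT := fun l => (mul_pos (hΛ l) hsT).le
  have hw : ∀ l m, 0 ≤ Real.exp (-(Λ l * sT)) * (Λ l * sT) ^ m / m.factorial := fun l m => by
    have := hrate l; positivity
  have hw1 := fun l => ProbabilityTheory.hasSum_one_poissonMeasure ⟨Λ l * sT, hrate l⟩
  have hexp := fun l => hP l ▸ hasSum_poisson_smul_pow_one_add_inv_smul (Q l) (hΛ l).ne' sT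
  simpa [hπhat0, hπtilde0] using sum_abs_sub_le_of_vecMul (hπtilde0 ▸ ⟨hπ0, hπ0sum⟩) hπhat hπtilde
    (fun l => mem_rowStochastic_of_hasSum (hPpow l) (hw l) (hw1 l) (hexp l))
    (fun l => sum_smul_apply_nonneg (hPpow l) (hw l) _)
    (fun l => sum_smul_apply_le_of_hasSum (hPpow l) (hw l) (hexp l) _)
    (fun l i => (sum_row_sum_smul_of_mem_rowStochastic (hPpow l) _ i).ge) L

/-- Accumulated error bound of the truncated uniformization
approximation over consecutive intervals of length `sT` (Theorem 1). -/
theorem accumulated_uniformization_error_bound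
    {n : ℕ} (hn : 1 ≤ n) (sT : ℝ) (hsT : 0 < sT)
    (Q : ℕ → Matrix (Fin n) (Fin n) ℝ)
    (hoff : ∀ l, ∀ i j : Fin n, i ≠ j → 0 ≤ Q l i j)
    (hrow : ∀ l, ∀ i : Fin n, ∑ j, Q l i j = 0)
    (Λ : ℕ → ℝ) (hΛ : ∀ l, 0 < Λ l)
    (hΛQ : ∀ l, ∀ i : Fin n, |Q l i i| ≤ Λ l)
    (P : ℕ → Matrix (Fin n) (Fin n) ℝ)
    (hP : ∀ l, P l = 1 + (Λ l)⁻¹ • Q l)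
    (U : ℕ → ℕ)
    (π0 : Fin n → ℝ) (hπ0 : ∀ i, 0 ≤ π0 i) (hπ0sum : ∑ i, π0 i = 1)
    (πtilde πhat : ℕ → Fin n → ℝ)
    (hπtilde0 : πtilde 0 = π0) (hπhat0 : πhat 0 = π0)
    (hπtilde : ∀ l, πtilde (l + 1) = πtilde l ᵥ* NormedSpace.exp (sT • Q l))
    (hπhat : ∀ l, πhat (l + 1) = πhat l ᵥ* (∑ m ∈ Finset.range (U l + 1),
        (Real.exp (-(Λ l * sT)) * (Λ l * sT) ^ m / m.factorial) • (P l) ^ m)) :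
    ∀ L : ℕ,
      ∑ i, |πhat L i - πtilde L i|
        ≤ ∑ l ∈ Finset.range L,
            (1 - ∑ m ∈ Finset.range (U l + 1),
                Real.exp (-(Λ l * sT)) * (Λ l * sT) ^ m / m.factorial) :=
  accumulated_uniformization_error_bound_general sT hsT Q hoff hrow Λ hΛ hΛQ P hP U π0 hπ0 hπ0sum
    πtilde πhat hπtilde0 hπhat0 hπtilde hπhat
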